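/- Let F be a family of polynomials with d_reg(F) = d < ∞ and all generators of degree ≤ d. If m is a monic monomial and f ∈ V_{F,d+1} with deg(f) ≤ d, then the product mf admits a representation mf = Σ m_i a_i g_i where each g_i ∈ V_{F,d+1}, each m_i a monic monomial, a_i ∈ K, and deg(m_i g_i) ≤ deg(mf) for all i, with exactly one term having m_i = 1 and all other g_i having top parts that are monomials of degree d. -/

import Mathlib

/-!
Because `d` is the degree of regularity, every monomial `x^w` of degree `d` lies in the ideal
generated by the top parts of `F`; lifting ideal elements through `V_{F,d+1}` degree by degree
gives `q_w ∈ V_{F,d+1}` with top part `x^w`. Hence the degree-`(d+1)` part of any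
`h ∈ V_{F,d+1}` can be cancelled by a combination of the products `x_j q_w`, leaving an element
of `V_{F,d+1}` of degree `≤ d`. Multiplying `f` by one variable at a time and re-splitting the
part that stays in `V_{F,d+1}` whenever it reaches degree `d + 1` writes `m f` as an element of
`V_{F,d+1}` plus a combination of monomial multiples `x^m q_w`, none of degree above `deg (m f)`.
-/

open MvPolynomial

noncomputable section

/-- The total degree of a monomial exponent vector. -/
def mdeg {n : ℕ} (s : Fin n →₀ ℕ) : ℕ := s.sum fun _ e => e

/-- The top homogeneous component (homogeneous part of largest degree) of a polynomial. -/
def topPart {n : ℕ} {K : Type*} [CommSemiring K] (f : MvPolynomial (Fin n) K) :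
    MvPolynomial (Fin n) K :=
  homogeneousComponent f.totalDegree f

/-- `regAt F d` says that the degree-`d` part of the ideal generated by the top homogeneous
parts of the elements of `F` is all of `K[x₁,…,xₙ]_d`; the degree of regularity of `F` is the
least such `d`. -/
def regAt {n : ℕ} {K : Type*} [Field K] (F : Finset (MvPolynomial (Fin n) K)) (d : ℕ) : Prop :=
  ∀ p : MvPolynomial (Fin n) K, p.IsHomogeneous d →
    p ∈ Ideal.span (topPart '' (F : Set (MvPolynomial (Fin n) K)))

/-- `V F d` : the smallest `K`-linear subspace containing all elements of `F` of total degree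
at most `d`, and closed under multiplication by monomials as long as the degree stays `≤ d`. -/
def V {n : ℕ} {K : Type*} [Field K] (F : Finset (MvPolynomial (Fin n) K)) (d : ℕ) :
    Submodule K (MvPolynomial (Fin n) K) :=
  sInf {W | (∀ f ∈ F, f.totalDegree ≤ d → f ∈ W) ∧
    ∀ (s : Fin n →₀ ℕ), ∀ f ∈ W,
      (monomial s (1 : K) * f).totalDegree ≤ d → monomial s (1 : K) * f ∈ W}

section General

variable {σ R : Type*} [CommSemiring R]

theorem homogeneousComponent_monomial_mul (D : ℕ) (s : σ →₀ ℕ) (c : R) (p : MvPolynomial σ R) :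
    homogeneousComponent D (monomial s c * p) =
      if s.degree ≤ D then monomial s c * homogeneousComponent (D - s.degree) p else 0 := by
  ext u
  have hdeg (h : s ≤ u) : u.degree = (u - s).degree + s.degree := by
    rw [← map_add, tsub_add_cancel_of_le h]
  split_ifs with hs <;>
  simp only [coeff_homogeneousComponent, coeff_monomial_mul', coeff_zero] <;>
  split_ifs <;> grind

theorem totalDegree_monomial_mul_le (s : σ →₀ ℕ) (c : R) (p : MvPolynomial σ R) :
    (monomial s c * p).totalDegree ≤ s.degree + p.totalDegree :=
  (totalDegree_mul _ _).trans (add_le_add_left (totalDegree_monomial_le s c) _)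

theorem totalDegree_le_of_homogeneousComponent_eq_zero {p : MvPolynomial σ R} {D : ℕ}
    (hp : p.totalDegree ≤ D + 1) (hD : homogeneousComponent (D + 1) p = 0) :
    p.totalDegree ≤ D := by
  refine Finset.sup_le fun u hu => ?_
  have hu' : u.degree ≤ D + 1 := (le_totalDegree hu).trans hp
  refine Nat.le_of_lt_succ (lt_of_le_of_ne hu' fun h => mem_support_iff.1 hu ?_)
  have h' : u.degree = D + 1 := h
  simpa [coeff_homogeneousComponent, h'] using congrArg (coeff u) hD

end General

section Regularity

variable {n : ℕ} {K : Type*} [Field K] {F : Finset (MvPolynomial (Fin n) K)}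

theorem mem_V_of_mem {e : ℕ} {f : MvPolynomial (Fin n) K} (hf : f ∈ F) (hd : f.totalDegree ≤ e) :
    f ∈ V F e :=
  Submodule.mem_sInf.2 fun _ hW => hW.1 f hf hd

theorem monomial_one_mul_mem_V {e : ℕ} {p : MvPolynomial (Fin n) K} (hp : p ∈ V F e)
    (s : Fin n →₀ ℕ) (hd : (monomial s (1 : K) * p).totalDegree ≤ e) :
    monomial s (1 : K) * p ∈ V F e :=
  Submodule.mem_sInf.2 fun W hW => hW.2 s p (Submodule.mem_sInf.1 hp W hW) hd

theorem monomial_mul_mem_V {e : ℕ} {p : MvPolynomial (Fin n) K} (hp : p ∈ V F e)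
    (s : Fin n →₀ ℕ) (c : K) (hd : s.degree + p.totalDegree ≤ e) :
    monomial s c * p ∈ V F e := by
  have hd' := (totalDegree_monomial_mul_le s (1 : K) p).trans hd
  rw [show monomial s c * p = c • (monomial s (1 : K) * p) by
    rw [← smul_mul_assoc, smul_monomial, smul_eq_mul, mul_one]]
  exact Submodule.smul_mem _ c (monomial_one_mul_mem_V hp s hd')

theorem totalDegree_le_of_mem_V {e : ℕ} {p : MvPolynomial (Fin n) K} (hp : p ∈ V F e) :
    p.totalDegree ≤ e :=
  (mem_restrictTotalDegree _ e p).1 <| Submodule.mem_sInf.1 hp _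
    ⟨fun f _ hd => (mem_restrictTotalDegree _ e f).2 hd,
     fun _ _ _ hd => (mem_restrictTotalDegree _ e _).2 hd⟩

theorem homogeneousComponent_mem_map_V {e : ℕ} (he : ∀ f ∈ F, f.totalDegree ≤ e)
    {p : MvPolynomial (Fin n) K}
    (hp : p ∈ Ideal.span (topPart '' (F : Set (MvPolynomial (Fin n) K)))) {D : ℕ} (hD : D ≤ e) :
    homogeneousComponent D p ∈
      (V F e ⊓ restrictTotalDegree (Fin n) K D).map (homogeneousComponent D) := by
  induction hp using Submodule.span_induction generalizing D with
  | mem x hx =>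
    obtain ⟨f, hf, rfl⟩ := hx
    rw [topPart, homogeneousComponent_of_mem (homogeneousComponent_mem _ _)]
    split_ifs with h
    · subst h
      exact ⟨f, ⟨mem_V_of_mem hf (he f hf), (mem_restrictTotalDegree _ _ _).2 le_rfl⟩, rfl⟩
    · exact zero_mem _
  | zero => simp
  | add x y _ _ hx hy => simpa using add_mem (hx hD) (hy hD)
  | smul c x _ hx =>
    induction c using MvPolynomial.induction_on' with
    | monomial u a =>
      rw [smul_eq_mul, homogeneousComponent_monomial_mul]
      split_ifs with hu
      · obtain ⟨q, ⟨hqV, hqD⟩, hqx⟩ := hx (D := D - u.degree) (by omega)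
        replace hqD := (mem_restrictTotalDegree _ _ _).1 hqD
        refine ⟨monomial u a * q, ⟨monomial_mul_mem_V hqV u a (by omega), ?_⟩, ?_⟩
        · have := totalDegree_monomial_mul_le u a q
          exact (mem_restrictTotalDegree _ _ _).2 (by omega)
        · rw [homogeneousComponent_monomial_mul, if_pos hu, hqx]
      · exact zero_mem _
    | add c₁ c₂ h₁ h₂ => simpa only [add_smul, map_add] using add_mem h₁ h₂

theorem topPart_eq_homogeneousComponent {q : MvPolynomial (Fin n) K} {D : ℕ}
    (hq : q.totalDegree ≤ D) (hD : homogeneousComponent D q ≠ 0) :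
    topPart q = homogeneousComponent D q := by
  have : q.totalDegree = D :=
    le_antisymm hq (not_lt.1 fun hlt => hD (homogeneousComponent_eq_zero _ _ hlt))
  rw [topPart, this]

variable {d : ℕ}

theorem exists_mem_V_homogeneousComponent_eq_monomial (hdeg : ∀ f ∈ F, f.totalDegree ≤ d)
    (hreg : regAt F d) {w : Fin n →₀ ℕ} (hw : w.degree = d) :
    ∃ q ∈ V F (d + 1), q.totalDegree ≤ d ∧ homogeneousComponent d q = monomial w (1 : K) := by
  have hhom : (monomial w (1 : K)).IsHomogeneous d := isHomogeneous_monomial 1 hw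
  obtain ⟨q, ⟨hqV, hqd⟩, hq⟩ := homogeneousComponent_mem_map_V
    (fun f hf => (hdeg f hf).trans d.le_succ) (hreg _ hhom) d.le_succ
  rw [homogeneousComponent_eq_self hhom] at hq
  exact ⟨q, hqV, (mem_restrictTotalDegree _ _ _).1 hqd, hq⟩

variable (F d) in
def pivotMultiples (B : ℕ) : Set (MvPolynomial (Fin n) K) :=
  {p | ∃ m q, m ≠ 0 ∧ q ∈ V F (d + 1) ∧ (∃ s, mdeg s = d ∧ topPart q = monomial s (1 : K)) ∧
    (monomial m (1 : K) * q).totalDegree ≤ B ∧ monomial m (1 : K) * q = p}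

theorem pivotMultiples_mono {B B' : ℕ} (h : B ≤ B') :
    pivotMultiples F d B ⊆ pivotMultiples F d B' := by
  rintro _ ⟨m, q, hm, hqV, htop, hB, rfl⟩
  exact ⟨m, q, hm, hqV, htop, hB.trans h, rfl⟩

theorem monomial_one_mul_mem_span_pivotMultiples {B : ℕ} {t : MvPolynomial (Fin n) K}
    (ht : t ∈ Submodule.span K (pivotMultiples F d B)) (e : Fin n →₀ ℕ) :
    monomial e (1 : K) * t ∈ Submodule.span K (pivotMultiples F d (B + e.degree)) := by
  induction ht using Submodule.span_induction with
  | mem _ hp =>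
    obtain ⟨m, q, hm, hqV, htop, hB, rfl⟩ := hp
    have hmul : monomial (e + m) (1 : K) * q = monomial e (1 : K) * (monomial m 1 * q) := by
      rw [← mul_assoc, monomial_mul, one_mul]
    refine Submodule.subset_span ⟨e + m, q, fun h => hm (add_eq_zero.1 h).2, hqV, htop, ?_, hmul⟩
    have := totalDegree_monomial_mul_le e (1 : K) (monomial m (1 : K) * q)
    rw [hmul]
    omega
  | zero => simp
  | add x y _ _ hx hy => simpa only [mul_add] using add_mem hx hy
  | smul c x _ hx => simpa only [mul_smul_comm] using Submodule.smul_mem _ c hx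

theorem span_pivotMultiples_le_V : Submodule.span K (pivotMultiples F d (d + 1)) ≤ V F (d + 1) :=
  Submodule.span_le.2 fun _ ⟨m, _, _, hqV, _, hB, hp⟩ => hp ▸ monomial_one_mul_mem_V hqV m hB

theorem exists_mem_pivotMultiples_homogeneousComponent_eq_monomial
    (hdeg : ∀ f ∈ F, f.totalDegree ≤ d) (hreg : regAt F d) {u : Fin n →₀ ℕ}
    (hu : u.degree = d + 1) :
    ∃ p ∈ pivotMultiples F d (d + 1), homogeneousComponent (d + 1) p = monomial u (1 : K) := by
  obtain ⟨j, hj⟩ : ∃ j, u j ≠ 0 := by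
    by_contra! h
    simp [show u = 0 from Finsupp.ext h] at hu
  set w := u - Finsupp.single j 1
  have hsplit : Finsupp.single j 1 + w = u :=
    add_tsub_cancel_of_le (Finsupp.single_le_iff.2 (Nat.one_le_iff_ne_zero.2 hj))
  have hw : w.degree = d := by
    have := congrArg Finsupp.degree hsplit
    rw [map_add, Finsupp.degree_single] at this
    omega
  obtain ⟨q, hqV, hqd, hq⟩ := exists_mem_V_homogeneousComponent_eq_monomial hdeg hreg hw
  have htop : topPart q = monomial w (1 : K) :=
    (topPart_eq_homogeneousComponent hqd (by simp [hq])).trans hq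
  refine ⟨monomial (Finsupp.single j 1) 1 * q,
    ⟨Finsupp.single j 1, q, by simp, hqV, ⟨w, hw, htop⟩, ?_, rfl⟩, ?_⟩
  · have := totalDegree_monomial_mul_le (Finsupp.single j 1) (1 : K) q
    rw [Finsupp.degree_single] at this
    omega
  · rw [homogeneousComponent_monomial_mul, Finsupp.degree_single, if_pos (by omega),
      Nat.add_sub_cancel, hq, monomial_mul, one_mul, hsplit]

theorem homogeneousSubmodule_le_map_span_pivotMultiples (hdeg : ∀ f ∈ F, f.totalDegree ≤ d)
    (hreg : regAt F d) :
    homogeneousSubmodule (Fin n) K (d + 1) ≤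
      (Submodule.span K (pivotMultiples F d (d + 1))).map (homogeneousComponent (d + 1)) := by
  refine ((homogeneousSubmodule_eq_finsupp_supported _ _ _).trans
    (restrictSupport_eq_span _ _)).le.trans (Submodule.span_le.2 ?_)
  rintro _ ⟨u, hu, rfl⟩
  obtain ⟨p, hp, hpu⟩ := exists_mem_pivotMultiples_homogeneousComponent_eq_monomial hdeg hreg hu
  exact ⟨p, Submodule.subset_span hp, hpu⟩

theorem V_le_sup_span_pivotMultiples (hdeg : ∀ f ∈ F, f.totalDegree ≤ d) (hreg : regAt F d) :
    V F (d + 1) ≤ V F (d + 1) ⊓ restrictTotalDegree (Fin n) K d ⊔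
      Submodule.span K (pivotMultiples F d (d + 1)) := by
  intro h hh
  obtain ⟨S, hS, hSh⟩ :=
    homogeneousSubmodule_le_map_span_pivotMultiples hdeg hreg (homogeneousComponent_mem (d + 1) h)
  have hSV := span_pivotMultiples_le_V hS
  refine Submodule.mem_sup.2 ⟨h - S, ⟨sub_mem hh hSV, ?_⟩, S, hS, sub_add_cancel h S⟩
  refine (mem_restrictTotalDegree _ _ _).2 (totalDegree_le_of_homogeneousComponent_eq_zero ?_ ?_)
  · exact (totalDegree_sub _ _).trans
      (max_le (totalDegree_le_of_mem_V hh) (totalDegree_le_of_mem_V hSV))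
  · rw [map_sub, hSh, sub_self]

variable (F d) in
def representable (B : ℕ) : Submodule K (MvPolynomial (Fin n) K) :=
  V F (d + 1) ⊓ restrictTotalDegree (Fin n) K B ⊔ Submodule.span K (pivotMultiples F d B)

theorem monomial_single_one_mul_mem_representable (hdeg : ∀ f ∈ F, f.totalDegree ≤ d)
    (hreg : regAt F d) {B : ℕ} {h : MvPolynomial (Fin n) K} (hh : h ∈ representable F d B)
    (j : Fin n) : monomial (Finsupp.single j 1) (1 : K) * h ∈ representable F d (B + 1) := by
  have hx_span {B' : ℕ} {t : MvPolynomial (Fin n) K} (hB' : B' ≤ B)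
      (ht : t ∈ Submodule.span K (pivotMultiples F d B')) :
      monomial (Finsupp.single j 1) (1 : K) * t ∈ representable F d (B + 1) := by
    have := monomial_one_mul_mem_span_pivotMultiples ht (Finsupp.single j 1)
    rw [Finsupp.degree_single] at this
    exact Submodule.mem_sup_right
      (Submodule.span_mono (pivotMultiples_mono (by omega)) this)
  have hx_low {r : MvPolynomial (Fin n) K} (hrV : r ∈ V F (d + 1))
      (hrd : r.totalDegree ≤ d) (hrB : r.totalDegree ≤ B) :
      monomial (Finsupp.single j 1) (1 : K) * r ∈ representable F d (B + 1) := by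
    have := totalDegree_monomial_mul_le (Finsupp.single j 1) (1 : K) r
    rw [Finsupp.degree_single] at this
    exact Submodule.mem_sup_left ⟨monomial_one_mul_mem_V hrV _ (by omega),
      (mem_restrictTotalDegree _ _ _).2 (by omega)⟩
  obtain ⟨g, ⟨hgV, hgB⟩, t, ht, rfl⟩ := Submodule.mem_sup.1 hh
  replace hgB := (mem_restrictTotalDegree _ _ _).1 hgB
  rw [mul_add]
  refine add_mem ?_ (hx_span le_rfl ht)
  by_cases hB : B ≤ d
  · exact hx_low hgV (hgB.trans hB) hgB
  -- `x_j g` may now have degree `d + 2`, so first trade the top part of `g` for pivot multiples.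
  obtain ⟨r, ⟨hrV, hrd⟩, t', ht', rfl⟩ :=
    Submodule.mem_sup.1 (V_le_sup_span_pivotMultiples hdeg hreg hgV)
  replace hrd := (mem_restrictTotalDegree _ _ _).1 hrd
  rw [mul_add]
  exact add_mem (hx_low hrV hrd (by omega)) (hx_span (by omega) ht')

theorem monomial_one_mul_mem_representable (hdeg : ∀ f ∈ F, f.totalDegree ≤ d)
    (hreg : regAt F d) (e : Fin n →₀ ℕ) {B : ℕ} {h : MvPolynomial (Fin n) K}
    (hh : h ∈ representable F d B) :
    monomial e (1 : K) * h ∈ representable F d (B + e.degree) := by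
  induction e using Finsupp.induction_linear generalizing B h with
  | zero => simpa using hh
  | add e₁ e₂ h₁ h₂ =>
    rw [map_add, add_comm e₁.degree, ← add_assoc, ← one_mul (1 : K), ← monomial_mul, mul_assoc]
    exact h₁ (h₂ hh)
  | single j k =>
    induction k with
    | zero => simpa using hh
    | succ k ih =>
      rw [Finsupp.degree_single] at ih ⊢
      rw [← add_assoc, Finsupp.single_add, add_comm (Finsupp.single j k), ← one_mul (1 : K),
        ← monomial_mul, mul_assoc]
      exact monomial_single_one_mul_mem_representable hdeg hreg ih j

theorem monomial_one_mul_mem_representable_totalDegree (hdeg : ∀ f ∈ F, f.totalDegree ≤ d)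
    (hreg : regAt F d) (e : Fin n →₀ ℕ) {f : MvPolynomial (Fin n) K} (hf : f ∈ V F (d + 1)) :
    monomial e (1 : K) * f ∈ representable F d (monomial e (1 : K) * f).totalDegree := by
  rcases eq_or_ne f 0 with rfl | hf0
  · simp
  have hdeg_mul : (monomial e (1 : K) * f).totalDegree = f.totalDegree + e.degree := by
    rw [totalDegree_mul_of_isDomain (by simp) hf0, totalDegree_monomial _ one_ne_zero, add_comm]
    rfl
  rw [hdeg_mul]
  exact monomial_one_mul_mem_representable hdeg hreg e
    (Submodule.mem_sup_left ⟨hf, (mem_restrictTotalDegree _ _ _).2 le_rfl⟩)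

theorem exists_sum_of_mem_representable {B : ℕ} {h : MvPolynomial (Fin n) K}
    (hh : h ∈ representable F d B) :
    ∃ (ℓ : ℕ) (mo : Fin ℓ → (Fin n →₀ ℕ)) (a : Fin ℓ → K) (g : Fin ℓ → MvPolynomial (Fin n) K),
      h = ∑ i, monomial (mo i) (a i) * g i ∧ (∀ i, g i ∈ V F (d + 1)) ∧
      (∀ i, (monomial (mo i) (1 : K) * g i).totalDegree ≤ B) ∧ (∃! i, mo i = 0) ∧
      (∀ i, mo i ≠ 0 → ∃ s : Fin n →₀ ℕ, mdeg s = d ∧ topPart (g i) = monomial s (1 : K)) := by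
  obtain ⟨g₀, ⟨hg₀V, hg₀B⟩, t, ht, rfl⟩ := Submodule.mem_sup.1 hh
  obtain ⟨ℓ, a, p, rfl⟩ := Submodule.mem_span_set'.1 ht
  choose mo g hmo hgV htop hgB hp using fun i => (p i).2
  refine ⟨ℓ + 1, Fin.cons 0 mo, Fin.cons 1 a, Fin.cons g₀ g, ?_, ?_, ?_, ?_, ?_⟩
  · simp only [Fin.sum_univ_succ, Fin.cons_zero, Fin.cons_succ, monomial_zero', C_1, one_mul, ← hp]
    congr 1
    refine Finset.sum_congr rfl fun i _ => ?_
    rw [← smul_mul_assoc, smul_monomial, smul_eq_mul, mul_one]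
  · exact Fin.forall_fin_succ.2 ⟨hg₀V, hgV⟩
  · refine Fin.forall_fin_succ.2 ⟨?_, hgB⟩
    simpa using (mem_restrictTotalDegree _ _ _).1 hg₀B
  · refine ⟨0, rfl, Fin.forall_fin_succ.2 ⟨fun _ => rfl, fun i hi => absurd hi (hmo i)⟩⟩
  · exact Fin.forall_fin_succ.2 ⟨fun h => absurd rfl h, fun i _ => htop i⟩

end Regularity

theorem stmt2_general {n : ℕ} {K : Type*} [Field K] (F : Finset (MvPolynomial (Fin n) K)) (d : ℕ)
    (hdeg : ∀ f ∈ F, f.totalDegree ≤ d)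
    (hreg : IsLeast {e | regAt F e} d)
    (mon : Fin n →₀ ℕ) (f : MvPolynomial (Fin n) K)
    (hf : f ∈ V F (d + 1)) :
    ∃ (ℓ : ℕ) (mo : Fin ℓ → (Fin n →₀ ℕ)) (a : Fin ℓ → K)
      (g : Fin ℓ → MvPolynomial (Fin n) K),
      monomial mon (1 : K) * f = ∑ i, monomial (mo i) (a i) * g i ∧
      (∀ i, g i ∈ V F (d + 1)) ∧
      (∀ i, (monomial (mo i) (1 : K) * g i).totalDegree ≤
        (monomial mon (1 : K) * f).totalDegree) ∧
      (∃! i, mo i = 0) ∧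
      (∀ i, mo i ≠ 0 →
        ∃ s : Fin n →₀ ℕ, mdeg s = d ∧ topPart (g i) = monomial s (1 : K)) :=
  exists_sum_of_mem_representable
    (monomial_one_mul_mem_representable_totalDegree hdeg hreg.1 mon hf)

/-- Lemma 3.5: for a monomial `m` and `f ∈ V_{F,d+1}` with `deg f ≤ d`, the product `m·f`
admits a representation `Σ mᵢ aᵢ gᵢ` with each `gᵢ ∈ V_{F,d+1}`, `deg(mᵢ gᵢ) ≤ deg(m f)`,
exactly one term with `mᵢ = 1`, and all other `gᵢ` with top part a monic monomial of degree `d`. -/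
theorem stmt2 {n : ℕ} {K : Type*} [Field K] (F : Finset (MvPolynomial (Fin n) K)) (d : ℕ)
    (hdeg : ∀ f ∈ F, f.totalDegree ≤ d)
    (hreg : IsLeast {e | regAt F e} d)
    (mon : Fin n →₀ ℕ) (f : MvPolynomial (Fin n) K)
    (hf : f ∈ V F (d + 1)) (hfd : f.totalDegree ≤ d) :
    ∃ (ℓ : ℕ) (mo : Fin ℓ → (Fin n →₀ ℕ)) (a : Fin ℓ → K)
      (g : Fin ℓ → MvPolynomial (Fin n) K),
      monomial mon (1 : K) * f = ∑ i, monomial (mo i) (a i) * g i ∧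
      (∀ i, g i ∈ V F (d + 1)) ∧
      (∀ i, (monomial (mo i) (1 : K) * g i).totalDegree ≤
        (monomial mon (1 : K) * f).totalDegree) ∧
      (∃! i, mo i = 0) ∧
      (∀ i, mo i ≠ 0 →
        ∃ s : Fin n →₀ ℕ, mdeg s = d ∧ topPart (g i) = monomial s (1 : K)) :=
  stmt2_general F d hdeg hreg mon f hf
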